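/- arXiv:math/0408036 — 5 statements merged into one kernel-verified Lean document; each statement's English description precedes it below -/
import Mathlib

section
/- A 2x2 complex matrix X is Hermitian with det(X) = -1 if and only if there exists F in SL(2,C) such that X = F e_3 F^*, where e_3 = diag(1,-1) and F^* is the conjugate transpose of F. -/
/-!
Sylvester's law of inertia, made explicit: diagonalising `X` by a unitary matrix and rescaling
the eigenvectors by `√|λᵢ|` gives `X = G diag(sign λ) Gᴴ` with `|det G| = √|det X| = 1`.
As `λ₁ λ₂ = det X < 0`, the signs are `(1, -1)` up to the swap `!![0, 1; -1, 0] ∈ SL(2, ℂ)`,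
and a phase `μ` with `μ² det G = 1` moves `G` into `SL(2, ℂ)` without changing `G e₃ Gᴴ`.
-/

open Matrix

namespace Matrix

variable {𝕜 n : Type*} [RCLike 𝕜] [Fintype n] [DecidableEq n]

theorem IsHermitian.exists_eq_mul_diagonal_sign_mul_conjTranspose {A : Matrix n n 𝕜}
    (hA : A.IsHermitian) :
    ∃ G : Matrix n n 𝕜, ‖G.det‖ = √‖A.det‖ ∧
      A = G * diagonal (fun i ↦ ((SignType.sign (hA.eigenvalues i) : ℝ) : 𝕜)) * Gᴴ := by
  set U : Matrix n n 𝕜 := (hA.eigenvectorUnitary : Matrix n n 𝕜)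
  set R : Matrix n n 𝕜 := diagonal fun i ↦ ((√|hA.eigenvalues i| : ℝ) : 𝕜)
  refine ⟨U * R, ?_, ?_⟩
  · have hU : ‖U.det‖ = 1 :=
      CStarRing.norm_of_mem_unitary (det_of_mem_unitary hA.eigenvectorUnitary.2)
    rw [det_mul, norm_mul, hU, one_mul, hA.det_eq_prod_eigenvalues, det_diagonal, norm_prod,
      norm_prod, Real.sqrt_prod _ fun i _ ↦ norm_nonneg _]
    simp [abs_of_nonneg (Real.sqrt_nonneg _)]
  · have hR : R * diagonal (fun i ↦ ((SignType.sign (hA.eigenvalues i) : ℝ) : 𝕜)) * Rᴴ =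
        diagonal (RCLike.ofReal ∘ hA.eigenvalues) := by
      simp only [R, diagonal_conjTranspose, diagonal_mul_diagonal]
      congr 1
      funext i
      simp only [Function.comp_apply, Pi.star_apply, RCLike.star_def, RCLike.conj_ofReal]
      norm_cast
      rw [mul_right_comm, Real.mul_self_sqrt (abs_nonneg _), abs_mul_sign]
    conv_lhs => rw [hA.spectral_theorem, Unitary.conjStarAlgAut_apply, ← hR]
    simp only [conjTranspose_mul, U, star_eq_conjTranspose, Matrix.mul_assoc]

theorem exists_det_eq_one_mul_mul_conjTranspose_eq [Nonempty n] {G : Matrix n n ℂ}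
    (hG : ‖G.det‖ = 1) (S : Matrix n n ℂ) :
    ∃ F : Matrix n n ℂ, F.det = 1 ∧ F * S * Fᴴ = G * S * Gᴴ := by
  obtain ⟨μ, hμ⟩ := IsAlgClosed.exists_pow_nat_eq G.det⁻¹ (Fintype.card_pos (α := n))
  have hμ_norm : ‖μ‖ = 1 := by
    refine (pow_eq_one_iff_of_nonneg (norm_nonneg μ) (Fintype.card_ne_zero (α := n))).1 ?_
    rw [← norm_pow, hμ, norm_inv, hG, inv_one]
  refine ⟨μ • G, ?_, ?_⟩
  · rw [det_smul, hμ, inv_mul_cancel₀ (norm_ne_zero_iff.1 (hG ▸ one_ne_zero))]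
  · have hμμ : μ * star μ = 1 := by
      rw [RCLike.star_def, Complex.mul_conj, Complex.normSq_eq_norm_sq, hμ_norm]
      norm_num
    rw [conjTranspose_smul, Matrix.smul_mul, Matrix.smul_mul, Matrix.mul_smul, smul_smul,
      hμμ, one_smul]

theorem exists_diagonal_sign_eq_mul_mul_conjTranspose {l : Fin 2 → ℝ} (hl : l 0 * l 1 < 0) :
    ∃ P : Matrix (Fin 2) (Fin 2) 𝕜, P.det = 1 ∧
      diagonal (fun i ↦ ((SignType.sign (l i) : ℝ) : 𝕜)) = P * !![1, 0; 0, -1] * Pᴴ := by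
  rcases mul_neg_iff.1 hl with ⟨h0, h1⟩ | ⟨h0, h1⟩
  · refine ⟨1, det_one, ?_⟩
    ext i j
    fin_cases i <;> fin_cases j <;> simp [h0, h1]
  · refine ⟨!![0, 1; -1, 0], by simp [det_fin_two_of], ?_⟩
    ext i j
    fin_cases i <;> fin_cases j <;> simp [h0, h1, vecMul, dotProduct, Fin.sum_univ_two]

end Matrix

/-- A 2x2 complex matrix X is Hermitian with det X = -1 iff X = F e₃ F* for some
F ∈ SL(2,ℂ), where e₃ = diag(1,-1). -/
theorem hermitian_det_neg_one_iff_exists_sl2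
    (X : Matrix (Fin 2) (Fin 2) ℂ) :
    (X.IsHermitian ∧ X.det = -1) ↔
      ∃ F : Matrix (Fin 2) (Fin 2) ℂ, F.det = 1 ∧
        X = F * !![(1 : ℂ), 0; 0, -1] * Fᴴ := by
  constructor
  · rintro ⟨hX, hdet⟩
    obtain ⟨G, hG, hXG⟩ := hX.exists_eq_mul_diagonal_sign_mul_conjTranspose
    have hprod : hX.eigenvalues 0 * hX.eigenvalues 1 = -1 := by
      have := hX.det_eq_prod_eigenvalues
      rw [hdet, Fin.prod_univ_two] at this
      exact Complex.ofReal_injective (by push_cast; exact this.symm)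
    obtain ⟨P, hP, hsign⟩ :=
      exists_diagonal_sign_eq_mul_mul_conjTranspose (𝕜 := ℂ) (hprod ▸ neg_one_lt_zero)
    obtain ⟨F, hF, hFGP⟩ := exists_det_eq_one_mul_mul_conjTranspose_eq (G := G * P)
      (by rw [det_mul, hP, mul_one, hG, hdet]; simp) !![(1 : ℂ), 0; 0, -1]
    refine ⟨F, hF, ?_⟩
    rw [hFGP, hXG, hsign, conjTranspose_mul]
    simp only [Matrix.mul_assoc]
  · rintro ⟨F, hF, rfl⟩
    have he₃ : (!![(1 : ℂ), 0; 0, -1]).IsHermitian := by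
      ext i j
      fin_cases i <;> fin_cases j <;> simp
    refine ⟨isHermitian_mul_mul_conjTranspose F he₃, ?_⟩
    simp [det_mul, hF, det_fin_two_of]
end

section
/- Let a_1, a_2, a_3 be complex numbers with a_1^2 + a_2*a_3 = 0. Then the negative determinant of the matrix [[a_1 + conj(a_1), -a_2 + conj(a_3)],[a_3 - conj(a_2), a_1 + conj(a_1)]] equals (|a_2| - |a_3|)^2; in particular it is nonnegative, and it is zero if and only if |a_2| = |a_3|. -/
open ComplexConjugate

/-! On a null triple, `‖a₁‖² = ‖a₂‖‖a₃‖` because `a₁² = -a₂a₃`. Expanding the determinant, the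
terms `a₁² + a₂a₃` and their conjugates cancel, leaving `‖a₂‖² + ‖a₃‖² - 2‖a₁‖²`, which is then the
square `(‖a₂‖ - ‖a₃‖)²`. -/

namespace Complex

theorem norm_sq_eq_norm_mul_norm_of_sq_add_mul_eq_zero {a1 a2 a3 : ℂ}
    (h : a1 ^ 2 + a2 * a3 = 0) : ‖a1‖ ^ 2 = ‖a2‖ * ‖a3‖ := by
  rw [← norm_pow, ← norm_mul, eq_neg_of_add_eq_zero_left h, norm_neg]

theorem neg_det_eq_norm_sq_sub (a1 a2 a3 : ℂ) :
    -Matrix.det !![a1 + conj a1, -a2 + conj a3; a3 - conj a2, a1 + conj a1]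
      = ((‖a2‖ ^ 2 + ‖a3‖ ^ 2 - 2 * ‖a1‖ ^ 2 : ℝ) : ℂ)
        - (a1 ^ 2 + a2 * a3 + conj (a1 ^ 2 + a2 * a3)) := by
  rw [Matrix.det_fin_two_of]
  push_cast [map_add, map_mul, map_pow]
  linear_combination mul_conj' a2 + mul_conj' a3 - 2 * mul_conj' a1

theorem neg_det_eq_sq_norm_sub_norm {a1 a2 a3 : ℂ} (h : a1 ^ 2 + a2 * a3 = 0) :
    -Matrix.det !![a1 + conj a1, -a2 + conj a3; a3 - conj a2, a1 + conj a1]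
      = (((‖a2‖ - ‖a3‖) ^ 2 : ℝ) : ℂ) := by
  rw [neg_det_eq_norm_sq_sub, h, map_zero, norm_sq_eq_norm_mul_norm_of_sq_add_mul_eq_zero h]
  push_cast
  ring

end Complex

/-- For a null curve (a₁² + a₂a₃ = 0), the induced de Sitter metric density is
-det[...] = (|a₂| - |a₃|)², nonnegative, vanishing iff |a₂| = |a₃|. -/
theorem neg_det_eq_abs_sub_sq (a1 a2 a3 : ℂ) (h : a1^2 + a2 * a3 = 0) :
    -Matrix.det !![a1 + conj a1, -a2 + conj a3;
                   a3 - conj a2, a1 + conj a1]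
      = (((‖a2‖ - ‖a3‖)^2 : ℝ) : ℂ) ∧
    (0 : ℝ) ≤ (‖a2‖ - ‖a3‖)^2 ∧
    (-Matrix.det !![a1 + conj a1, -a2 + conj a3;
                    a3 - conj a2, a1 + conj a1] = 0 ↔
      ‖a2‖ = ‖a3‖) := by
  have hdet := Complex.neg_det_eq_sq_norm_sub_norm h
  refine ⟨hdet, sq_nonneg _, ?_⟩
  rw [hdet, Complex.ofReal_eq_zero, sq_eq_zero_iff, sub_eq_zero]
end

section
/- Let g and w be complex numbers. Then the negative determinant of the matrix M + M^*, where M = w*[[g,-g^2],[1,-g]]*e_3 and e_3 = diag(1,-1), equals (1-|g|^2)^2 |w|^2. In particular, this vanishes if and only if |g| = 1 or w = 0. -/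
open Matrix

theorem weierstrass_mul_e3 (g : ℂ) :
    !![g, -g^2; 1, -g] * !![(1 : ℂ), 0; 0, -1] = !![g, g^2; 1, g] := by
  ext i j; fin_cases i <;> fin_cases j <;> simp [Matrix.mul_apply]

/-- Writing `‖z‖² = z * conj z` turns the claim into a polynomial identity in `g, w` and their
conjugates. -/
theorem neg_det_smul_add_conjTranspose (g w : ℂ) :
    -det (w • !![g, g^2; 1, g] + (w • !![g, g^2; 1, g])ᴴ)
      = (((1 - ‖g‖^2)^2 * ‖w‖^2 : ℝ) : ℂ) := by
  push_cast
  rw [← Complex.mul_conj', ← Complex.mul_conj']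
  simp [det_fin_two, conjTranspose_apply]
  ring

/-- With M = w·[[g,-g²],[1,-g]]·e₃, one has -det(M + Mᴴ) = (1-|g|²)²|w|²,
which vanishes iff |g| = 1 or w = 0. -/
theorem neg_det_first_fundamental_form (g w : ℂ) :
    -Matrix.det
        (w • (!![g, -g^2; 1, -g] * !![(1 : ℂ), 0; 0, -1]) +
          (w • (!![g, -g^2; 1, -g] * !![(1 : ℂ), 0; 0, -1]))ᴴ)
      = (((1 - ‖g‖^2)^2 * ‖w‖^2 : ℝ) : ℂ) ∧
    ((1 - ‖g‖^2)^2 * ‖w‖^2 = 0 ↔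
      ‖g‖ = 1 ∨ w = 0) := by
  refine ⟨by rw [weierstrass_mul_e3]; exact neg_det_smul_add_conjTranspose g w, ?_⟩
  have unit_norm : 1 - ‖g‖^2 = 0 ↔ ‖g‖ = 1 := by
    rw [sub_eq_zero, eq_comm, pow_eq_one_iff_of_nonneg (norm_nonneg g) two_ne_zero]
  simp [unit_norm]
end

section
/- Define F : C -> M_2(C) by F(z) = [[z+1, -z],[z, -z+1]]. Then for every z, det(F(z)) = 1 (so F takes values in SL(2,C)), the derivative F'(z) = [[1,-1],[1,-1]] has determinant 0 (so F is a holomorphic null immersion), and the map f(z) = F(z) e_3 F(z)^* satisfies det[d f] = 0 identically, i.e. writing f(x+iy) as a function of the real coordinates (x,y), the symmetric 2-tensor -det(f_x dx + f_y dy) vanishes identically on C. -/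
open Matrix

/-- F(z) = [[z+1,-z],[z,-z+1]]. -/
noncomputable def Fnull (z : ℂ) : Matrix (Fin 2) (Fin 2) ℂ :=
  !![z + 1, -z; z, -z + 1]

/-- f(x,y) = F(x+iy) e₃ F(x+iy)*. -/
noncomputable def fnull (x y : ℝ) : Matrix (Fin 2) (Fin 2) ℂ :=
  Fnull (x + y * Complex.I) * !![(1 : ℂ), 0; 0, -1] * (Fnull (x + y * Complex.I))ᴴ

/-!
Write `N = !![1, -1; 1, -1]` and `e₃ = !![1, 0; 0, -1]`. Then `F z = 1 + z • N`, and `N` has rank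
one with vanishing trace, so `det F = 1` and `det F' = det N = 0`. Moreover `N e₃ = e₃ Nᴴ = J`
(the all-ones matrix) and `N e₃ Nᴴ = 0`, so `f = e₃ + (z + z̄) • J = e₃ + 2 Re z • J`. Thus `f`
depends on `x` only, `df = 2J dx`, and `det J = 0` makes `-det df` vanish identically.
-/

lemma det_Fnull (z : ℂ) : (Fnull z).det = 1 := by
  simp only [Fnull, det_fin_two, of_apply, cons_val', cons_val_zero, cons_val_one, cons_val_fin_one]
  ring

lemma Fnull_apply (w : ℂ) (i j : Fin 2) :
    Fnull w i j = (1 : Matrix (Fin 2) (Fin 2) ℂ) i j + w * !![(1 : ℂ), -1; 1, -1] i j := by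
  fin_cases i <;> fin_cases j <;> simp [Fnull] <;> ring

lemma deriv_Fnull_apply (z : ℂ) (i j : Fin 2) :
    deriv (fun w : ℂ => Fnull w i j) z = !![(1 : ℂ), -1; 1, -1] i j := by
  simp only [Fnull_apply, deriv_const_add', deriv_mul_const_field', deriv_id'', one_mul]

lemma fnull_apply (x y : ℝ) (i j : Fin 2) :
    fnull x y i j = !![(1 : ℂ), 0; 0, -1] i j + (x : ℂ) * !![(2 : ℂ), 2; 2, 2] i j := by
  fin_cases i <;> fin_cases j <;>
    simp [fnull, Fnull, mul_apply, Fin.sum_univ_two, conjTranspose_apply] <;> ring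

lemma hasDerivAt_const_add_ofReal_mul (c d : ℂ) (x : ℝ) :
    HasDerivAt (fun t : ℝ => c + (t : ℂ) * d) d x := by
  simpa using (((hasDerivAt_id x).ofReal_comp).mul_const d).const_add c

lemma deriv_fnull_fst (x y : ℝ) (i j : Fin 2) :
    deriv (fun t : ℝ => fnull t y i j) x = !![(2 : ℂ), 2; 2, 2] i j := by
  simp only [fnull_apply]
  exact (hasDerivAt_const_add_ofReal_mul _ _ x).deriv

lemma deriv_fnull_snd (x y : ℝ) (i j : Fin 2) :
    deriv (fun s : ℝ => fnull x s i j) y = 0 := by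
  simp only [fnull_apply, deriv_const]

/-- A degenerate example: F(z) = [[z+1,-z],[z,-z+1]] is a holomorphic null
immersion into SL(2,ℂ) (det F = 1, F' = [[1,-1],[1,-1]] has det 0 and is
nonzero), but the induced metric -det(f_x dx + f_y dy) of f = F e₃ F*
vanishes identically. -/
theorem degenerate_null_immersion_example :
    (∀ z : ℂ, Matrix.det (Fnull z) = 1) ∧
    (∀ z : ℂ, ∀ i j : Fin 2,
      deriv (fun w : ℂ => Fnull w i j) z = !![(1 : ℂ), -1; 1, -1] i j) ∧
    Matrix.det !![(1 : ℂ), -1; 1, -1] = 0 ∧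
    !![(1 : ℂ), -1; 1, -1] ≠ 0 ∧
    (∀ x y a b : ℝ,
      -Matrix.det (Matrix.of fun i j : Fin 2 =>
          a * deriv (fun t : ℝ => fnull t y i j) x +
          b * deriv (fun s : ℝ => fnull x s i j) y) = 0) := by
  refine ⟨det_Fnull, deriv_Fnull_apply, by simp [det_fin_two], fun h => ?_, fun x y a b => ?_⟩
  · simpa using congrFun (congrFun h 0) 0
  · have hdf : (Matrix.of fun i j : Fin 2 =>
        a * deriv (fun t : ℝ => fnull t y i j) x + b * deriv (fun s : ℝ => fnull x s i j) y) =
        (a : ℂ) • !![(2 : ℂ), 2; 2, 2] := by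
      ext i j
      simp [deriv_fnull_fst, deriv_fnull_snd]
    simp [hdf, det_fin_two]
end

section
/- Let x = (x_0, x_1, x_2, x_3) satisfy -x_0^2 + x_1^2 + x_2^2 + x_3^2 = 1 and x_0 > 1, and define p(x) = (1/(1+x_0)) * (x_1, x_2, x_3) in R^3. Then |p(x)|^2 = (1 + x_0^2)/(1 + x_0)^2, and 1/2 < |p(x)|^2 < 1. Moreover, p is a bijection from { x in S^3_1 : x_0 > 1 } onto the spherical shell { y in R^3 : 1/sqrt(2) < |y| < 1 }. -/
/-!
On the hyperboloid, `|x₁,x₂,x₃|² = 1 + x₀²`, so `|p(x)|² = r(x₀)` with `r(t) = (1 + t²)/(1 + t)²`.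
Since `r(s) - r(t)` has the sign of `(s - t)(s t - 1)`, `r` increases strictly on `[1, ∞)`, from
`r(1) = 1/2` towards `1`, and solving the quadratic `r(t) = q` shows that it attains every value of
`(1/2, 1)`. Hence `x ↦ p(x)` is injective on `{x₀ > 1}` (the radius determines `x₀`, and then
`(x₁,x₂,x₃) = (1 + x₀) p(x)`), and `y ↦ (t, (1 + t) y)` with `r(t) = |y|²` inverts it on the shell.
-/

open Real

/-- The projection p(x) = (1/(1+x₀))·(x₁,x₂,x₃). -/
noncomputable def deSitterProj (x : ℝ × ℝ × ℝ × ℝ) : ℝ × ℝ × ℝ :=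
  (x.2.1 / (1 + x.1), x.2.2.1 / (1 + x.1), x.2.2.2 / (1 + x.1))

lemma deSitterProj_sq_norm {x : ℝ × ℝ × ℝ × ℝ}
    (hx : -x.1^2 + x.2.1^2 + x.2.2.1^2 + x.2.2.2^2 = 1) :
    (deSitterProj x).1^2 + (deSitterProj x).2.1^2 + (deSitterProj x).2.2^2
      = (1 + x.1^2) / (1 + x.1)^2 := by
  simp only [deSitterProj, div_pow, ← add_div]
  congr 1
  linarith

lemma one_half_lt_one_add_sq_div_sq {t : ℝ} (ht : t ≠ 1) (ht' : 1 + t ≠ 0) :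
    1 / 2 < (1 + t^2) / (1 + t)^2 := by
  rw [div_lt_div_iff₀ two_pos (by positivity)]
  nlinarith [sq_pos_of_ne_zero (sub_ne_zero.mpr ht)]

lemma one_add_sq_div_sq_lt_one {t : ℝ} (ht : 0 < t) : (1 + t^2) / (1 + t)^2 < 1 := by
  rw [div_lt_one (by positivity)]
  nlinarith

lemma strictMonoOn_one_add_sq_div_sq :
    StrictMonoOn (fun t : ℝ => (1 + t^2) / (1 + t)^2) (Set.Ici 1) := by
  intro s (hs : 1 ≤ s) t (ht : 1 ≤ t) hst
  rw [div_lt_div_iff₀ (by positivity) (by positivity)]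
  nlinarith [mul_pos (sub_pos.mpr hst) (by nlinarith : 0 < s * t - 1)]

lemma exists_one_add_sq_div_sq_eq {q : ℝ} (hq : 1 / 2 < q) (hq' : q < 1) :
    ∃ t, 1 < t ∧ (1 + t^2) / (1 + t)^2 = q := by
  set s := √(2 * q - 1)
  have hs : s^2 = 2 * q - 1 := sq_sqrt (by linarith)
  have hpos : 0 < 1 - q := by linarith
  -- the larger root of `(1 - q) t² - 2 q t + (1 - q) = 0`
  refine ⟨(q + s) / (1 - q), ?_, ?_⟩
  · rw [one_lt_div hpos]
    linarith [sqrt_nonneg (2 * q - 1)]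
  · rw [div_eq_iff (by positivity)]
    field_simp
    linear_combination (1 - q) * hs

lemma one_div_sqrt_two_lt_sqrt_and_sqrt_lt_one_iff {q : ℝ} :
    1 / √2 < √q ∧ √q < 1 ↔ 1 / 2 < q ∧ q < 1 := by
  rw [lt_sqrt (by positivity), sqrt_lt' one_pos, div_pow, sq_sqrt zero_le_two, one_pow]

lemma deSitterProj_injOn :
    Set.InjOn deSitterProj
      {x : ℝ × ℝ × ℝ × ℝ | -x.1^2 + x.2.1^2 + x.2.2.1^2 + x.2.2.2^2 = 1 ∧ x.1 > 1} := by
  rintro x ⟨hx, hx₀⟩ z ⟨hz, hz₀⟩ hxz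
  have h₀ : x.1 = z.1 := by
    refine strictMonoOn_one_add_sq_div_sq.injOn hx₀.le hz₀.le ?_
    simp only [← deSitterProj_sq_norm hx, ← deSitterProj_sq_norm hz, hxz]
  have hne : 1 + z.1 ≠ 0 := by linarith
  simp only [deSitterProj, Prod.mk.injEq, h₀, div_left_inj' hne] at hxz
  exact Prod.ext h₀ (Prod.ext hxz.1 (Prod.ext hxz.2.1 hxz.2.2))

lemma deSitterProj_surjOn :
    Set.SurjOn deSitterProj
      {x : ℝ × ℝ × ℝ × ℝ | -x.1^2 + x.2.1^2 + x.2.2.1^2 + x.2.2.2^2 = 1 ∧ x.1 > 1}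
      {y : ℝ × ℝ × ℝ |
        1 / √2 < √(y.1^2 + y.2.1^2 + y.2.2^2) ∧ √(y.1^2 + y.2.1^2 + y.2.2^2) < 1} := by
  intro y hy
  rw [Set.mem_ofPred_eq, one_div_sqrt_two_lt_sqrt_and_sqrt_lt_one_iff] at hy
  obtain ⟨t, ht, hrt⟩ := exists_one_add_sq_div_sq_eq hy.1 hy.2
  have hne : 1 + t ≠ 0 := by linarith
  rw [div_eq_iff (by positivity)] at hrt
  refine ⟨(t, (1 + t) * y.1, (1 + t) * y.2.1, (1 + t) * y.2.2), ⟨?_, ht⟩, ?_⟩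
  · dsimp only
    linear_combination -hrt
  · simp only [deSitterProj, mul_div_cancel_left₀ _ hne]

/-- For x ∈ S³₁ with x₀ > 1, |p(x)|² = (1+x₀²)/(1+x₀)² lies in (1/2, 1), and p is
a bijection from {x ∈ S³₁ : x₀ > 1} onto the shell {y : 1/√2 < |y| < 1}. -/
theorem deSitter_projection :
    (∀ x : ℝ × ℝ × ℝ × ℝ,
      -x.1^2 + x.2.1^2 + x.2.2.1^2 + x.2.2.2^2 = 1 → x.1 > 1 →
      ((deSitterProj x).1^2 + (deSitterProj x).2.1^2 + (deSitterProj x).2.2^2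
          = (1 + x.1^2) / (1 + x.1)^2 ∧
        1 / 2 < (deSitterProj x).1^2 + (deSitterProj x).2.1^2 + (deSitterProj x).2.2^2 ∧
        (deSitterProj x).1^2 + (deSitterProj x).2.1^2 + (deSitterProj x).2.2^2 < 1)) ∧
    Set.BijOn deSitterProj
      {x : ℝ × ℝ × ℝ × ℝ | -x.1^2 + x.2.1^2 + x.2.2.1^2 + x.2.2.2^2 = 1 ∧ x.1 > 1}
      {y : ℝ × ℝ × ℝ |
        1 / Real.sqrt 2 < Real.sqrt (y.1^2 + y.2.1^2 + y.2.2^2) ∧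
        Real.sqrt (y.1^2 + y.2.1^2 + y.2.2^2) < 1} := by
  refine ⟨fun x hx hx₀ ↦ ?_, fun x ⟨hx, hx₀⟩ ↦ ?_, deSitterProj_injOn, deSitterProj_surjOn⟩
  · rw [deSitterProj_sq_norm hx]
    exact ⟨rfl, one_half_lt_one_add_sq_div_sq hx₀.ne' (by linarith),
      one_add_sq_div_sq_lt_one (by linarith)⟩
  · rw [Set.mem_ofPred_eq, one_div_sqrt_two_lt_sqrt_and_sqrt_lt_one_iff, deSitterProj_sq_norm hx]
    exact ⟨one_half_lt_one_add_sq_div_sq hx₀.ne' (by linarith),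
      one_add_sq_div_sq_lt_one (by linarith)⟩
end
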